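/- For all (k,t,ω) ∈ K×ℝ₊×Ω, the extended value function satisfies v(k,t,ω) = sup_{P ∈ ℛ(k,t,ω)} E^P[ψ(k,t, ω ⊗̃_t X)], where v(k,t,ω) := sup_{P ∈ 𝒞(k,t,ω)} E^P[ψ(k,t,X)]. -/

import Mathlib

noncomputable section

open MeasureTheory Filter Topology Set
open scoped BigOperators NNReal ENNReal

/-- Euclidean space `ℝ^d`. -/
abbrev Ed (d : ℕ) := EuclideanSpace ℝ (Fin d)

/-- The path space `Ω = C(ℝ₊; ℝ^d)` with the local uniform topology. -/
abbrev PathR (d : ℕ) := C(ℝ≥0, Ed d)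

instance pathRMeasurableSpace (d : ℕ) : MeasurableSpace (PathR d) := borel _

instance pathRBorelSpace (d : ℕ) : BorelSpace (PathR d) := ⟨rfl⟩

/-- Lebesgue measure on `ℝ₊`. -/
def lebNN : Measure ℝ≥0 := (volume : Measure ℝ).comap (↑)

/-- The right-continuous natural filtration generated by the shifted coordinate process
`X_{·+t}`. -/
def shiftedFiltration (d : ℕ) (t : ℝ≥0) : Filtration ℝ≥0 (pathRMeasurableSpace d) where
  seq s := ⨅ (r : ℝ≥0) (_ : s < r),
    ⨆ (u : ℝ≥0) (_ : u ≤ r),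
      MeasurableSpace.comap (fun ω : PathR d => ω (u + t))
        (inferInstance : MeasurableSpace (Ed d))
  mono' := by
    intro s s' h
    refine le_iInf₂ fun r hr => ?_
    exact iInf₂_le r (lt_of_le_of_lt h hr)
  le' := by
    intro s
    refine le_trans (iInf₂_le (s + 1) (lt_add_one s)) ?_
    refine iSup₂_le fun u _ => ?_
    exact ((continuous_eval_const (u + t) : Continuous fun ω : PathR d => ω (u + t)).measurable).comap_le

/-- A process `M` is a local martingale (w.r.t. the filtration `ℱ` and the measure `P`)
if there is a localizing sequence of stopping times. -/
def IsLocalMartingale {d : ℕ} (ℱ : Filtration ℝ≥0 (pathRMeasurableSpace d))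
    (M : ℝ≥0 → PathR d → ℝ) (P : Measure (PathR d)) : Prop :=
  ∃ τ : ℕ → PathR d → ℝ≥0,
    (∀ n, IsStoppingTime ℱ (fun ω => ((τ n ω : ℝ≥0) : WithTop ℝ≥0))) ∧
    (∀ n ω, τ n ω ≤ τ (n + 1) ω) ∧
    (∀ᵐ ω ∂P, Tendsto (fun n => τ n ω) atTop atTop) ∧
    (∀ n, Martingale (stoppedProcess M (fun ω => ((τ n ω : ℝ≥0) : WithTop ℝ≥0))) ℱ P)

/-- The drift-compensated coordinate process `X^i_{s+t} - X^i_t - ∫_0^s β^i_u du`. -/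
def drifted {d : ℕ} (t : ℝ≥0) (β : ℝ≥0 → PathR d → Ed d) (i : Fin d) :
    ℝ≥0 → PathR d → ℝ :=
  fun s ω => ω (s + t) i - ω t i - ∫ u in Set.Icc (0 : ℝ≥0) s, β u ω i ∂lebNN

/-- `P` is the law of a continuous semimartingale after time `t` whose characteristics are
absolutely continuous with densities `(β, a)`: equivalently (martingale-problem
formulation), `X_{·+t} - X_t - ∫ β` and its products compensated by `∫ a` are local
martingales for the right-continuous natural filtration of `X_{·+t}`. -/
def IsACSemimartingaleWith {d : ℕ} (t : ℝ≥0) (β : ℝ≥0 → PathR d → Ed d)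
    (a : ℝ≥0 → PathR d → Fin d → Fin d → ℝ) (P : Measure (PathR d)) : Prop :=
  Measurable (Function.uncurry β) ∧ Measurable (Function.uncurry a) ∧
  (∀ i, IsLocalMartingale (shiftedFiltration d t) (drifted t β i) P) ∧
  (∀ i j, IsLocalMartingale (shiftedFiltration d t)
    (fun s ω => drifted t β i s ω * drifted t β j s ω -
      ∫ u in Set.Icc (0 : ℝ≥0) s, a u ω i j ∂lebNN) P)

/-- `Θ(k,t,ω) = {(b(k,f,t,ω), σσ*(k,f,t,ω)) : f ∈ F}`. -/
def Theta {d r : ℕ} {K F : Type*}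
    (b : K → F → ℝ≥0 → PathR d → Ed d)
    (σ : K → F → ℝ≥0 → PathR d → Fin d → Fin r → ℝ)
    (k : K) (t : ℝ≥0) (ω : PathR d) : Set (Ed d × (Fin d → Fin d → ℝ)) :=
  {x | ∃ f : F, x = (b k f t ω, fun i j => ∑ l, σ k f t ω i l * σ k f t ω j l)}

/-- The set `𝒞(k,t,ω)` of laws of continuous semimartingales after `t` which start in the
path `ω` on `[0,t]` and whose absolutely continuous differential characteristics take
values in `Θ(k, ·+t, X)`, `(λ ⊗ P)`-a.e. -/
def CC {d r : ℕ} {K F : Type*}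
    (b : K → F → ℝ≥0 → PathR d → Ed d)
    (σ : K → F → ℝ≥0 → PathR d → Fin d → Fin r → ℝ)
    (k : K) (t : ℝ≥0) (ω : PathR d) : Set (ProbabilityMeasure (PathR d)) :=
  {P | (P : Measure (PathR d)) {ω' : PathR d | ∀ s : ℝ≥0, s ≤ t → ω' s = ω s} = 1 ∧
    ∃ (β : ℝ≥0 → PathR d → Ed d) (a : ℝ≥0 → PathR d → Fin d → Fin d → ℝ),
      IsACSemimartingaleWith t β a (P : Measure (PathR d)) ∧
      ∀ᵐ p ∂(lebNN.prod (P : Measure (PathR d))),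
        (β p.1 p.2, a p.1 p.2) ∈ Theta b σ k (p.1 + t) p.2}

/-- The extended value function `v(k,t,ω) = sup_{P ∈ 𝒞(k,t,ω)} E^P[ψ(k,t,X)]`. -/
def vFun {d r : ℕ} {K F : Type*}
    (b : K → F → ℝ≥0 → PathR d → Ed d)
    (σ : K → F → ℝ≥0 → PathR d → Fin d → Fin r → ℝ)
    (ψ : K → ℝ≥0 → PathR d → ℝ) (k : K) (t : ℝ≥0) (ω : PathR d) : ℝ :=
  ⨆ P ∈ CC b σ k t ω, ∫ x, ψ k t x ∂(P : ProbabilityMeasure (PathR d))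

/-- Non-anticipativity: the value at time `t` depends on the path only through its values
at times `s < t` (together with Borel measurability this characterises predictability). -/
def NonAnticipative {d : ℕ} {E' : Type*} (g : ℝ≥0 → PathR d → E') : Prop :=
  ∀ (t : ℝ≥0) (ω α : PathR d), (∀ s < t, ω s = α s) → g t ω = g t α

/-- Condition 3.1. -/
def Condition31 {d r : ℕ} {K F : Type*} [TopologicalSpace K] [TopologicalSpace F]
    (b : K → F → ℝ≥0 → PathR d → Ed d)
    (σ : K → F → ℝ≥0 → PathR d → Fin d → Fin r → ℝ) : Prop :=
  (FirstCountableTopology K ∧ CompactSpace F ∧ TopologicalSpace.MetrizableSpace F) ∧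
  (Continuous fun p : K × F × ℝ≥0 × PathR d => b p.1 p.2.1 p.2.2.1 p.2.2.2) ∧
  (Continuous fun p : K × F × ℝ≥0 × PathR d => σ p.1 p.2.1 p.2.2.1 p.2.2.2) ∧
  (∀ (k : K) (t : ℝ≥0) (ω : PathR d), Convex ℝ (Theta b σ k t ω)) ∧
  (∀ T : ℝ≥0, 0 < T → ∀ G : Set K, IsCompact G → ∃ C > 0, ∀ k ∈ G, ∀ (f : F) (t : ℝ≥0),
    t ≤ T → ∀ ω : PathR d,
      ‖b k f t ω‖ + ‖σ k f t ω‖ ≤ C * (1 + ⨆ s : Set.Icc (0 : ℝ≥0) t, ‖ω s‖)) ∧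
  (∀ (k : K) (T : ℝ≥0), 0 < T → ∃ C > 0, ∀ (f : F) (t : ℝ≥0), t ≤ T → ∀ ω α : PathR d,
    (⨆ s : Set.Icc (0 : ℝ≥0) t, ‖ω s‖) ≤ (T : ℝ) → (⨆ s : Set.Icc (0 : ℝ≥0) t, ‖α s‖) ≤ (T : ℝ) →
    ‖b k f t ω - b k f t α‖ ≤ C * (⨆ s : Set.Icc (0 : ℝ≥0) t, ‖ω s - α s‖) ∧
    ‖σ k f t ω - σ k f t α‖ ≤ C * (⨆ s : Set.Icc (0 : ℝ≥0) t, ‖ω s - α s‖))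

/-- The concatenation `ω ⊗̃_t ω' = ω 𝟙_{[0,t)} + (ω(t) + ω'(· - t) - ω'(0)) 𝟙_{[t,∞)}`. -/
def concat {d : ℕ} (ω α : PathR d) (t : ℝ≥0) : PathR d :=
  ⟨fun s => if s < t then ω s else ω t + α (s - t) - α 0, by
    have hrw : (fun s : ℝ≥0 => if t ≤ s then ω t + α (s - t) - α 0 else ω s) =
        (fun s : ℝ≥0 => if s < t then ω s else ω t + α (s - t) - α 0) := by
      funext s
      rcases lt_or_ge s t with h | h
      · rw [if_pos h, if_neg (not_le.mpr h)]
      · rw [if_neg (not_lt.mpr h), if_pos h]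
    rw [← hrw]
    refine Continuous.if_le ?_ ω.continuous continuous_const continuous_id fun s hs => ?_
    · exact (continuous_const.add (α.continuous.comp (by fun_prop))).sub continuous_const
    · rw [← hs]; simp⟩

/-- The set `ℛ(k,t,ω)` of laws of continuous semimartingales (after time `0`) starting in
`δ_{ω(t)}` whose absolutely continuous differential characteristics take values in
`Θ(k, ·+t, ω ⊗̃_t X)`, `(λ ⊗ P)`-a.e. -/
def RR {d r : ℕ} {K F : Type*}
    (b : K → F → ℝ≥0 → PathR d → Ed d)
    (σ : K → F → ℝ≥0 → PathR d → Fin d → Fin r → ℝ)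
    (k : K) (t : ℝ≥0) (ω : PathR d) : Set (ProbabilityMeasure (PathR d)) :=
  {P | (P : Measure (PathR d)).map (fun ω' : PathR d => ω' 0) = Measure.dirac (ω t) ∧
    ∃ (β : ℝ≥0 → PathR d → Ed d) (a : ℝ≥0 → PathR d → Fin d → Fin d → ℝ),
      IsACSemimartingaleWith 0 β a (P : Measure (PathR d)) ∧
      ∀ᵐ p ∂(lebNN.prod (P : Measure (PathR d))),
        (β p.1 p.2, a p.1 p.2) ∈ Theta b σ k (p.1 + t) (concat ω p.2 t)}

/-!
Shifting, `x ↦ x(· + t)`, and concatenation, `α ↦ ω ⊗̃_t α`, are mutually inverse almost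
surely: under `P ∈ 𝒞(k,t,ω)` the path agrees with `ω` on `[0,t]`, and under `Q ∈ ℛ(k,t,ω)` it
starts at `ω(t)`. Both maps respect the right-continuous natural filtrations of the shifted
coordinate process and preserve increments after `t`, so they transport the local-martingale
description of the characteristics. Hence `P ↦ P ∘ shift⁻¹` maps `𝒞(k,t,ω)` onto `ℛ(k,t,ω)`
with `E^P[ψ(X)] = E^{P ∘ shift⁻¹}[ψ(ω ⊗̃_t X)]`, and the two suprema range over the same values.
-/

section BiSup

variable {α ι κ : Type*} [ConditionallyCompleteLattice α]

lemma range_ciSup_mem (A : Set ι) (f : ι → α) :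
    range (fun i => ⨆ _ : i ∈ A, f i) = f '' A ∪ (fun _ => sSup ∅) '' Aᶜ := by
  ext y
  constructor
  · rintro ⟨i, rfl⟩
    by_cases hi : i ∈ A
    · exact Or.inl ⟨i, hi, (ciSup_pos (f := fun _ => f i) hi).symm⟩
    · exact Or.inr ⟨i, hi, (ciSup_neg (f := fun _ => f i) hi).symm⟩
  · rintro (⟨i, hi, rfl⟩ | ⟨i, hi, rfl⟩)
    · exact ⟨i, ciSup_pos (f := fun _ => f i) hi⟩
    · exact ⟨i, ciSup_neg (f := fun _ => f i) hi⟩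

/-- Outside `A` the supremand `⨆ _ : i ∈ A, f i` takes the junk value `sSup ∅`, so the two
suprema agree only if both complements are empty or both are not. -/
lemma biSup_eq_biSup_of_image_eq {A : Set ι} {B : Set κ} {f : ι → α} {g : κ → α}
    (himg : f '' A = g '' B) (hcompl : Aᶜ.Nonempty ↔ Bᶜ.Nonempty) :
    ⨆ i ∈ A, f i = ⨆ j ∈ B, g j := by
  have hjunk : (fun _ => sSup ∅) '' Aᶜ = (fun _ => (sSup ∅ : α)) '' Bᶜ := by
    by_cases hA : Aᶜ.Nonempty
    · rw [hA.image_const, (hcompl.1 hA).image_const]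
    · rw [not_nonempty_iff_eq_empty.1 hA, not_nonempty_iff_eq_empty.1 (mt hcompl.2 hA),
        image_empty, image_empty]
  rw [iSup, iSup, range_ciSup_mem, range_ciSup_mem, himg, hjunk]

end BiSup

section Martingales

variable {ι Ω₁ Ω₂ : Type*} [Preorder ι] {m₁ : MeasurableSpace Ω₁} {m₂ : MeasurableSpace Ω₂}

lemma martingale_of_setIntegral_eq {μ : Measure Ω₁} [IsFiniteMeasure μ] {ℱ : Filtration ι m₁}
    {f : ι → Ω₁ → ℝ} (hadp : StronglyAdapted ℱ f) (hint : ∀ i, Integrable (f i) μ)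
    (hf : ∀ i j, i ≤ j → ∀ s, MeasurableSet[ℱ i] s → ∫ x in s, f i x ∂μ = ∫ x in s, f j x ∂μ) :
    Martingale f ℱ μ := by
  refine martingale_iff.2 ⟨?_, submartingale_of_setIntegral_le hadp hint
    fun i j hij s hs => (hf i j hij s hs).le⟩
  have hneg : Submartingale (-f) ℱ μ :=
    submartingale_of_setIntegral_le (fun i => (hadp i).neg) (fun i => (hint i).neg)
      fun i j hij s hs => by simpa [integral_neg] using (hf i j hij s hs).ge
  simpa using hneg.neg

variable {S : Ω₁ → Ω₂} {T : Ω₂ → Ω₁} {ℱ : Filtration ι m₁} {𝒢 : Filtration ι m₂}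
  {P : Measure Ω₁} [IsProbabilityMeasure P]

lemma Martingale.comp_map (hSm : Measurable S) (hTm : Measurable T)
    (hS : ∀ i, Measurable[ℱ i, 𝒢 i] S) (hT : ∀ i, Measurable[𝒢 i, ℱ i] T)
    (hid : ∀ᵐ x ∂P, T (S x) = x) {M : ι → Ω₁ → ℝ} (hM : Martingale M ℱ P) :
    Martingale (fun i y => M i (T y)) 𝒢 (P.map S) := by
  have : IsProbabilityMeasure (P.map S) := Measure.isProbabilityMeasure_map hSm.aemeasurable
  have hM_meas (i : ι) : AEStronglyMeasurable (fun y => M i (T y)) (P.map S) :=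
    (((hM.stronglyAdapted i).mono (ℱ.le i)).comp_measurable hTm).aestronglyMeasurable
  have hcomp (i : ι) (A : Set Ω₁) : ∫ x in A, M i (T (S x)) ∂P = ∫ x in A, M i x ∂P :=
    integral_congr_ae (ae_restrict_of_ae (hid.mono fun x hx => congrArg (M i) hx))
  refine martingale_of_setIntegral_eq (fun i => (hM.stronglyAdapted i).comp_measurable (hT i))
    (fun i => ?_) fun i j hij A hA => ?_
  · rw [integrable_map_measure (hM_meas i) hSm.aemeasurable]
    exact (hM.integrable i).congr (hid.mono fun x hx => (congrArg (M i) hx).symm)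
  · have hAm : MeasurableSet A := 𝒢.le i A hA
    rw [setIntegral_map hAm (hM_meas i) hSm.aemeasurable,
      setIntegral_map hAm (hM_meas j) hSm.aemeasurable, hcomp, hcomp]
    exact hM.setIntegral_eq hij (hS i hA)

end Martingales

section Transport

variable {Ω₁ Ω₂ : Type*} {m₁ : MeasurableSpace Ω₁} {m₂ : MeasurableSpace Ω₂}
  {S : Ω₁ → Ω₂} {T : Ω₂ → Ω₁}

lemma ae_map_of_ae_of_ae_leftInverse {μ : Measure Ω₁} (hSm : Measurable S) (hTm : Measurable T)
    (hid : ∀ᵐ x ∂μ, T (S x) = x) {p : Ω₁ → Prop} (h : ∀ᵐ x ∂μ, p x) :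
    ∀ᵐ y ∂μ.map S, p (T y) := by
  refine ae_of_ae_map hTm.aemeasurable ?_
  rwa [Measure.map_map hTm hSm, Measure.map_congr (f := T ∘ S) (g := id) hid, Measure.map_id]

lemma ae_prod_map_of_ae_prod {α : Type*} [MeasurableSpace α] {ν : Measure α} [SFinite ν]
    {μ : Measure Ω₁} [SFinite μ] (hSm : Measurable S) (hTm : Measurable T)
    (hid : ∀ᵐ x ∂μ, T (S x) = x) {R : α → Ω₁ → Prop} (h : ∀ᵐ q ∂ν.prod μ, R q.1 q.2) :
    ∀ᵐ q ∂ν.prod (μ.map S), R q.1 (T q.2) := by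
  have hid' : ∀ᵐ q ∂ν.prod μ, Prod.map id T (Prod.map id S q) = q :=
    Measure.quasiMeasurePreserving_snd.ae (p := fun x => T (S x) = x) hid |>.mono
      fun q hq => Prod.ext rfl hq
  have hmap : ν.prod (μ.map S) = (ν.prod μ).map (Prod.map id S) := by
    rw [← Measure.map_prod_map _ _ measurable_id hSm, Measure.map_id]
  rw [hmap]
  exact ae_map_of_ae_of_ae_leftInverse (measurable_id.prodMap hSm) (measurable_id.prodMap hTm)
    hid' h

end Transport

section Paths

variable {d : ℕ}

def pathShift (t : ℝ≥0) (x : PathR d) : PathR d :=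
  x.comp ⟨(· + t), by fun_prop⟩

@[simp]
lemma pathShift_apply (t : ℝ≥0) (x : PathR d) (s : ℝ≥0) : pathShift t x s = x (s + t) := rfl

lemma continuous_pathShift (t : ℝ≥0) : Continuous (pathShift (d := d) t) :=
  ContinuousMap.continuous_precomp _

lemma concat_apply_of_lt (ω α : PathR d) {t s : ℝ≥0} (h : s < t) : concat ω α t s = ω s :=
  if_pos h

lemma concat_apply_of_le (ω α : PathR d) {t s : ℝ≥0} (h : t ≤ s) :
    concat ω α t s = ω t + α (s - t) - α 0 :=
  if_neg h.not_gt

@[simp]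
lemma concat_apply_add (ω α : PathR d) (t s : ℝ≥0) :
    concat ω α t (s + t) = ω t + α s - α 0 := by
  rw [concat_apply_of_le ω α le_add_self, add_tsub_cancel_right]

@[simp]
lemma concat_apply_self (ω α : PathR d) (t : ℝ≥0) : concat ω α t t = ω t := by
  simpa using concat_apply_add ω α t 0

lemma continuous_concat (ω : PathR d) (t : ℝ≥0) :
    Continuous fun α : PathR d => concat ω α t := by
  refine ContinuousMap.continuous_of_continuous_uncurry _ ?_
  have h : Function.uncurry (fun (α : PathR d) (s : ℝ≥0) => concat ω α t s) =
      fun p : PathR d × ℝ≥0 => if p.2 ≤ t then ω p.2 else ω t + p.1 (p.2 - t) - p.1 0 := by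
    ext1 ⟨α, s⟩
    rcases lt_or_ge s t with h | h
    · simp [concat_apply_of_lt ω α h, h.le]
    · rcases h.eq_or_lt with rfl | h
      · simp
      · simp [concat_apply_of_le ω α h.le, h.not_ge]
  rw [h]
  refine Continuous.if_le (by fun_prop) ?_ continuous_snd continuous_const fun p hp => ?_
  · exact (continuous_const.add (continuous_eval.comp (continuous_fst.prodMk
      (continuous_snd.sub continuous_const)))).sub
      (continuous_eval.comp (continuous_fst.prodMk continuous_const))
  · simp [hp]

lemma isClosed_setOf_agree (ω : PathR d) (t : ℝ≥0) :
    IsClosed {x : PathR d | ∀ s ≤ t, x s = ω s} := by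
  simp only [ofPred_forall]
  exact isClosed_biInter fun s _ => isClosed_eq (continuous_eval_const s) continuous_const

lemma concat_agree (ω α : PathR d) (t : ℝ≥0) : ∀ s ≤ t, concat ω α t s = ω s := by
  intro s hs
  rcases hs.lt_or_eq with h | rfl
  · exact concat_apply_of_lt ω α h
  · exact concat_apply_self ω α s

lemma concat_pathShift_of_agree {ω x : PathR d} {t : ℝ≥0} (hx : ∀ s ≤ t, x s = ω s) :
    concat ω (pathShift t x) t = x := by
  ext1 s
  rcases lt_or_ge s t with h | h
  · rw [concat_apply_of_lt _ _ h, hx s h.le]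
  · rw [concat_apply_of_le _ _ h, pathShift_apply, pathShift_apply, tsub_add_cancel_of_le h,
      zero_add, hx t le_rfl, add_sub_cancel_left]

lemma pathShift_concat_of_eq {ω α : PathR d} {t : ℝ≥0} (hα : α 0 = ω t) :
    pathShift t (concat ω α t) = α := by
  ext1 s
  rw [pathShift_apply, concat_apply_add, hα, add_sub_cancel_left]

end Paths

section Filtrations

variable {d : ℕ}

abbrev coordSigma (d : ℕ) (t r : ℝ≥0) : MeasurableSpace (PathR d) :=
  ⨆ (u : ℝ≥0) (_ : u ≤ r),
    MeasurableSpace.comap (fun x : PathR d => x (u + t)) (inferInstance : MeasurableSpace (Ed d))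

lemma shiftedFiltration_eq_iInf_coordSigma (t s : ℝ≥0) :
    shiftedFiltration d t s = ⨅ (r : ℝ≥0) (_ : s < r), coordSigma d t r :=
  rfl

lemma measurable_coordSigma {t r u : ℝ≥0} (hu : u ≤ r) :
    Measurable[coordSigma d t r] fun x : PathR d => x (u + t) :=
  measurable_iff_comap_le.2 <| le_iSup₂ (f := fun (u : ℝ≥0) (_ : u ≤ r) =>
    MeasurableSpace.comap (fun x : PathR d => x (u + t)) (inferInstance : MeasurableSpace (Ed d)))
    u hu

lemma measurable_shiftedFiltration_of_coord {t t' : ℝ≥0} {T : PathR d → PathR d}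
    (hT : ∀ r u : ℝ≥0, u ≤ r → Measurable[coordSigma d t' r] fun x => T x (u + t)) (s : ℝ≥0) :
    Measurable[shiftedFiltration d t' s, shiftedFiltration d t s] T := by
  rw [measurable_iff_comap_le, shiftedFiltration_eq_iInf_coordSigma,
    shiftedFiltration_eq_iInf_coordSigma]
  refine le_iInf₂ fun r hr => (MeasurableSpace.comap_mono (iInf₂_le r hr)).trans ?_
  simp only [coordSigma, MeasurableSpace.comap_iSup, MeasurableSpace.comap_comp]
  exact iSup₂_le fun u hu => measurable_iff_comap_le.1 (hT r u hu)

lemma measurable_pathShift_shiftedFiltration (t s : ℝ≥0) :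
    Measurable[shiftedFiltration d t s, shiftedFiltration d 0 s] (pathShift t) :=
  measurable_shiftedFiltration_of_coord (fun _ _ hu => by
    simpa using measurable_coordSigma (t := t) hu) s

lemma measurable_concat_shiftedFiltration (ω : PathR d) (t s : ℝ≥0) :
    Measurable[shiftedFiltration d 0 s, shiftedFiltration d t s] fun α => concat ω α t :=
  measurable_shiftedFiltration_of_coord (fun r _ hu => by
    simp only [concat_apply_add]
    exact (measurable_const.add (by simpa using measurable_coordSigma (t := 0) hu)).sub
      (by simpa using measurable_coordSigma (t := 0) (zero_le (a := r)))) s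

end Filtrations

instance : IsFiniteMeasureOnCompacts lebNN :=
  .comap' _ NNReal.continuous_coe NNReal.isClosedEmbedding_coe.measurableEmbedding

section Semimartingales

variable {d : ℕ} {S T : PathR d → PathR d}

lemma IsLocalMartingale.comp_map (hSm : Measurable S) (hTm : Measurable T)
    {ℱ 𝒢 : Filtration ℝ≥0 (pathRMeasurableSpace d)}
    (hS : ∀ s, Measurable[ℱ s, 𝒢 s] S) (hT : ∀ s, Measurable[𝒢 s, ℱ s] T)
    {P : Measure (PathR d)} [IsProbabilityMeasure P] (hid : ∀ᵐ x ∂P, T (S x) = x)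
    {M : ℝ≥0 → PathR d → ℝ} (hM : IsLocalMartingale ℱ M P) :
    IsLocalMartingale 𝒢 (fun s y => M s (T y)) (P.map S) := by
  obtain ⟨τ, hτ, hmono, htend, hmart⟩ := hM
  exact ⟨fun n y => τ n (T y), fun n s => hT s (hτ n s), fun n y => hmono n (T y),
    ae_map_of_ae_of_ae_leftInverse hSm hTm hid htend,
    fun n => Martingale.comp_map hSm hTm hS hT hid (hmart n)⟩

lemma drifted_comp {t t' : ℝ≥0} (hinc : ∀ x s, T x (s + t) - T x t = x (s + t') - x t')
    (β : ℝ≥0 → PathR d → Ed d) (i : Fin d) (s : ℝ≥0) (x : PathR d) :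
    drifted t β i s (T x) = drifted t' (fun u y => β u (T y)) i s x := by
  simp only [drifted]
  congr 1
  simpa using congrArg (· i) (hinc x s)

lemma IsACSemimartingaleWith.comp_map {t t' : ℝ≥0} (hSm : Measurable S) (hTm : Measurable T)
    (hS : ∀ s, Measurable[shiftedFiltration d t s, shiftedFiltration d t' s] S)
    (hT : ∀ s, Measurable[shiftedFiltration d t' s, shiftedFiltration d t s] T)
    (hinc : ∀ x s, T x (s + t) - T x t = x (s + t') - x t')
    {β : ℝ≥0 → PathR d → Ed d} {a : ℝ≥0 → PathR d → Fin d → Fin d → ℝ}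
    {P : Measure (PathR d)} [IsProbabilityMeasure P] (hid : ∀ᵐ x ∂P, T (S x) = x)
    (h : IsACSemimartingaleWith t β a P) :
    IsACSemimartingaleWith t' (fun u y => β u (T y)) (fun u y => a u (T y)) (P.map S) := by
  obtain ⟨hβ, ha, hdrift, hquad⟩ := h
  have hTm' : Measurable (Prod.map (id : ℝ≥0 → ℝ≥0) T) := measurable_id.prodMap hTm
  refine ⟨hβ.comp hTm', ha.comp hTm', fun i => ?_, fun i j => ?_⟩
  · simpa only [drifted_comp hinc] using (hdrift i).comp_map hSm hTm hS hT hid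
  · simpa only [drifted_comp hinc] using (hquad i j).comp_map hSm hTm hS hT hid

end Semimartingales

section Correspondence

variable {d r : ℕ} {K F : Type*}
  (b : K → F → ℝ≥0 → PathR d → Ed d) (σ : K → F → ℝ≥0 → PathR d → Fin d → Fin r → ℝ)
  {k : K} {t : ℝ≥0} {ω : PathR d}

lemma ae_concat_pathShift {P : Measure (PathR d)} [IsProbabilityMeasure P]
    (h : P {x : PathR d | ∀ s ≤ t, x s = ω s} = 1) :
    ∀ᵐ x ∂P, concat ω (pathShift t x) t = x := by
  have hagree : ∀ᵐ x ∂P, ∀ s ≤ t, x s = ω s :=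
    (ae_iff_measure_eq (isClosed_setOf_agree ω t).measurableSet.nullMeasurableSet).2
      (by rw [h, measure_univ])
  exact hagree.mono fun x hx => concat_pathShift_of_agree hx

lemma ae_pathShift_concat {Q : Measure (PathR d)}
    (h : Q.map (fun x : PathR d => x 0) = Measure.dirac (ω t)) :
    ∀ᵐ α ∂Q, pathShift t (concat ω α t) = α := by
  have hinit : ∀ᵐ α ∂Q, α 0 = ω t := by
    refine ae_of_ae_map (f := fun x : PathR d => x 0) (p := (· = ω t))
      (continuous_eval_const _).aemeasurable ?_
    rw [h, ae_dirac_eq]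
    exact eventually_pure.2 rfl
  exact hinit.mono fun α hα => pathShift_concat_of_eq hα

lemma map_pathShift_mem_RR {P : ProbabilityMeasure (PathR d)} (hP : P ∈ CC b σ k t ω) :
    P.map (continuous_pathShift t).aemeasurable ∈ RR b σ k t ω := by
  obtain ⟨hagree, β, a, hsemi, hΘ⟩ := hP
  have hid := ae_concat_pathShift hagree
  refine ⟨?_, fun u α => β u (concat ω α t), fun u α => a u (concat ω α t), ?_, ?_⟩
  · have hinit : ∀ᵐ x ∂(P : Measure (PathR d)), x t = ω t :=
      hid.mono fun x hx => by rw [← hx, concat_apply_self]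
    rw [ProbabilityMeasure.toMeasure_map,
      Measure.map_map (continuous_eval_const _).measurable (continuous_pathShift t).measurable]
    simp only [Function.comp_def, pathShift_apply, zero_add]
    rw [Measure.map_congr hinit, Measure.map_const, measure_univ, one_smul]
  · rw [ProbabilityMeasure.toMeasure_map]
    exact hsemi.comp_map (continuous_pathShift t).measurable (continuous_concat ω t).measurable
      (measurable_pathShift_shiftedFiltration t) (measurable_concat_shiftedFiltration ω t)
      (fun α s => by simp only [concat_apply_add, concat_apply_self, add_zero]; abel) hid
  · rw [ProbabilityMeasure.toMeasure_map]
    exact ae_prod_map_of_ae_prod (R := fun u x => (β u x, a u x) ∈ Theta b σ k (u + t) x)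
      (continuous_pathShift t).measurable (continuous_concat ω t).measurable hid hΘ

lemma map_concat_mem_CC {Q : ProbabilityMeasure (PathR d)} (hQ : Q ∈ RR b σ k t ω) :
    Q.map (continuous_concat ω t).aemeasurable ∈ CC b σ k t ω := by
  obtain ⟨hinit, β, a, hsemi, hΘ⟩ := hQ
  have hid := ae_pathShift_concat hinit
  have hagree : (Q.map (continuous_concat ω t).aemeasurable : Measure (PathR d))
      {x : PathR d | ∀ s ≤ t, x s = ω s} = 1 := by
    rw [ProbabilityMeasure.toMeasure_map,
      Measure.map_apply (continuous_concat ω t).measurable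
        (isClosed_setOf_agree ω t).measurableSet,
      preimage_eq_univ_iff.2 fun _ ⟨α, hα⟩ => hα ▸ concat_agree ω α t, measure_univ]
  refine ⟨hagree, fun u x => β u (pathShift t x), fun u x => a u (pathShift t x), ?_, ?_⟩
  · rw [ProbabilityMeasure.toMeasure_map]
    exact hsemi.comp_map (continuous_concat ω t).measurable (continuous_pathShift t).measurable
      (measurable_concat_shiftedFiltration ω t) (measurable_pathShift_shiftedFiltration t)
      (fun x s => by simp) hid
  · have hback := ae_concat_pathShift hagree
    rw [ProbabilityMeasure.toMeasure_map] at hback ⊢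
    filter_upwards [ae_prod_map_of_ae_prod
      (R := fun u α => (β u α, a u α) ∈ Theta b σ k (u + t) (concat ω α t))
      (continuous_concat ω t).measurable (continuous_pathShift t).measurable hid hΘ,
      Measure.quasiMeasurePreserving_snd.ae hback] with q hq hx
    rwa [hx] at hq

lemma image_integral_CC_eq {g : PathR d → ℝ} (hg : Measurable g) :
    (fun P : ProbabilityMeasure (PathR d) => ∫ x, g x ∂P) '' CC b σ k t ω =
      (fun Q : ProbabilityMeasure (PathR d) => ∫ x, g (concat ω x t) ∂Q) '' RR b σ k t ω := by
  have hgc : Measurable fun x => g (concat ω x t) := hg.comp (continuous_concat ω t).measurable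
  ext y
  constructor
  · rintro ⟨P, hP, rfl⟩
    refine ⟨_, map_pathShift_mem_RR b σ hP, ?_⟩
    dsimp only
    rw [ProbabilityMeasure.toMeasure_map,
      integral_map (continuous_pathShift t).aemeasurable hgc.aestronglyMeasurable]
    exact integral_congr_ae ((ae_concat_pathShift hP.1).mono fun x hx => congrArg g hx)
  · rintro ⟨Q, hQ, rfl⟩
    refine ⟨_, map_concat_mem_CC b σ hQ, ?_⟩
    dsimp only
    rw [ProbabilityMeasure.toMeasure_map,
      integral_map (continuous_concat ω t).aemeasurable hg.aestronglyMeasurable]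

lemma nonempty_compl_CC_iff : (CC b σ k t ω)ᶜ.Nonempty ↔ (RR b σ k t ω)ᶜ.Nonempty := by
  rcases subsingleton_or_nontrivial (Ed d) with hE | hE
  · -- `d = 0`: the path space is a point
    have hmap (P : ProbabilityMeasure (PathR d)) {f : PathR d → PathR d} (hf : AEMeasurable f P) :
        P.map hf = P := by
      obtain rfl : f = id := funext fun _ => Subsingleton.elim _ _
      exact Subtype.ext (by simp)
    exact ⟨fun ⟨P, hP⟩ => ⟨P, fun hQ => hP (hmap P _ ▸ map_concat_mem_CC b σ hQ)⟩,
      fun ⟨Q, hQ⟩ => ⟨Q, fun hP => hQ (hmap Q _ ▸ map_pathShift_mem_RR b σ hP)⟩⟩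
  · obtain ⟨v, hv⟩ := exists_ne (ω t)
    let δ : ProbabilityMeasure (PathR d) :=
      ⟨Measure.dirac (ContinuousMap.const ℝ≥0 v), inferInstance⟩
    have hCC : δ ∉ CC b σ k t ω := fun h => hv <| by
      have h1 : Measure.dirac (ContinuousMap.const ℝ≥0 v) {x : PathR d | ∀ s ≤ t, x s = ω s} = 1 :=
        h.1
      rw [Measure.dirac_apply' _ (isClosed_setOf_agree ω t).measurableSet,
        indicator_eq_one_iff_mem] at h1
      exact h1 t le_rfl
    have hRR : δ ∉ RR b σ k t ω := fun h => hv <| by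
      have h1 : (Measure.dirac (ContinuousMap.const ℝ≥0 v)).map (fun x : PathR d => x 0) =
          Measure.dirac (ω t) := h.1
      rw [Measure.map_dirac' (continuous_eval_const _).measurable, dirac_eq_dirac_iff] at h1
      exact h1
    exact iff_of_true ⟨δ, hCC⟩ ⟨δ, hRR⟩

end Correspondence

theorem extendedValueFunction_eq_sup_RR_general {d r : ℕ} {K F : Type*}
    [TopologicalSpace K]
    (b : K → F → ℝ≥0 → PathR d → Ed d)
    (σ : K → F → ℝ≥0 → PathR d → Fin d → Fin r → ℝ)
    (ψ : K → ℝ≥0 → PathR d → ℝ)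
    (hψc : Continuous fun p : K × ℝ≥0 × PathR d => ψ p.1 p.2.1 p.2.2) :
    ∀ (k : K) (t : ℝ≥0) (ω : PathR d),
      vFun b σ ψ k t ω =
        ⨆ P ∈ RR b σ k t ω, ∫ x, ψ k t (concat ω x t) ∂(P : ProbabilityMeasure (PathR d)) := by
  intro k t ω
  have hψ : Continuous (ψ k t) := hψc.comp (f := fun x => (k, t, x)) (by fun_prop)
  exact biSup_eq_biSup_of_image_eq (image_integral_CC_eq b σ hψ.measurable)
    (nonempty_compl_CC_iff b σ)

/-- Lemma 3.5: the extended value function admits the representation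
`v(k,t,ω) = sup_{P ∈ ℛ(k,t,ω)} E^P[ψ(k,t, ω ⊗̃_t X)]`. -/
theorem extendedValueFunction_eq_sup_RR {d r : ℕ} {K F : Type*}
    [TopologicalSpace K] [TopologicalSpace F]
    (b : K → F → ℝ≥0 → PathR d → Ed d)
    (σ : K → F → ℝ≥0 → PathR d → Fin d → Fin r → ℝ)
    (hbm : ∀ (k : K) (f : F), Measurable fun p : ℝ≥0 × PathR d => b k f p.1 p.2)
    (hσm : ∀ (k : K) (f : F), Measurable fun p : ℝ≥0 × PathR d => σ k f p.1 p.2)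
    (hbna : ∀ (k : K) (f : F), NonAnticipative fun t ω => b k f t ω)
    (hσna : ∀ (k : K) (f : F), NonAnticipative fun t ω => σ k f t ω)
    (ψ : K → ℝ≥0 → PathR d → ℝ)
    (hψc : Continuous fun p : K × ℝ≥0 × PathR d => ψ p.1 p.2.1 p.2.2)
    (hψb : ∃ C : ℝ, ∀ (k : K) (t : ℝ≥0) (ω : PathR d), |ψ k t ω| ≤ C) :
    ∀ (k : K) (t : ℝ≥0) (ω : PathR d),
      vFun b σ ψ k t ω =
        ⨆ P ∈ RR b σ k t ω, ∫ x, ψ k t (concat ω x t) ∂(P : ProbabilityMeasure (PathR d)) :=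
  extendedValueFunction_eq_sup_RR_general b σ ψ hψc
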